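/- Consider the gray-box process with J : ℝ^p → ℝ both M-Lipschitz and L-smooth, and assume each ε_k is square-integrable. Then for every k ≥ 1, E‖φ̃_k‖² ≤ (4(1 − α_k)² p² M² η² / δ²) E‖φ̃_{k−1}‖² + 8 α_k² E‖∇J(w_k)‖² + 48 (1 − α_k)² p² E‖∇J(w_{k−1})‖² + 4 α_k² E‖ε_k‖² + 8 α_k² L² δ² + 6 (1 − α_k)² L² p² δ², where E denotes expectation over the i.i.d. sphere samples. -/

import Mathlib

open MeasureTheory Metric ProbabilityTheory

/-- The uniform (normalized surface) probability measure on the unit sphere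
`S_{p-1} ⊆ ℝ^p`, viewed as a measure on the ambient space. -/
noncomputable def sphereUniform (p : ℕ) : Measure (EuclideanSpace ℝ (Fin p)) :=
  ((volume : Measure (EuclideanSpace ℝ (Fin p))).toSphere Set.univ)⁻¹ •
    Measure.map Subtype.val (volume : Measure (EuclideanSpace ℝ (Fin p))).toSphere

variable {Ω : Type*}

/-- Auxiliary two-step recursion for the gray-box process: `grayAux … n = (w_{n-1}, w_n)`
in the paper's indexing, where `v n` stands for the paper's exploration sample `v_{n-1}`,
`ε k` for the paper's gradient error `ε_k`, and `wneg`, `w0` are the paper's initial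
points `w_{-1}`, `w_0`. -/
noncomputable def grayAux (p : ℕ) (η δ : ℝ) (J : EuclideanSpace ℝ (Fin p) → ℝ)
    (v : ℕ → Ω → EuclideanSpace ℝ (Fin p)) (ε : ℕ → Ω → EuclideanSpace ℝ (Fin p))
    (α : ℕ → ℝ) (wneg w0 : EuclideanSpace ℝ (Fin p)) :
    ℕ → (Ω → EuclideanSpace ℝ (Fin p)) × (Ω → EuclideanSpace ℝ (Fin p))
  | 0 => (fun _ => wneg, fun _ => w0)
  | (k + 1) =>
      let ih := grayAux p η δ J v ε α wneg w0 k
      (ih.2, fun ω =>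
        ih.2 ω - η • (α k • (gradient J (ih.2 ω + δ • v (k + 1) ω) - ε k ω)
          + (1 - α k) • ((((p : ℝ) / δ) *
              (J (ih.2 ω + δ • v (k + 1) ω) - J (ih.1 ω + δ • v k ω))) • v (k + 1) ω)))

/-- `grayW … n` is the paper's candidate solution `w_{n-1}`; in particular
`grayW … 0 = w_{-1}`, `grayW … 1 = w_0`, and for `k ≥ 0` the paper's `w_{k+1}` is
`grayW … (k+2) = grayW … (k+1) - η φ̃_k`. -/
noncomputable def grayW (p : ℕ) (η δ : ℝ) (J : EuclideanSpace ℝ (Fin p) → ℝ)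
    (v : ℕ → Ω → EuclideanSpace ℝ (Fin p)) (ε : ℕ → Ω → EuclideanSpace ℝ (Fin p))
    (α : ℕ → ℝ) (wneg w0 : EuclideanSpace ℝ (Fin p)) (n : ℕ) :
    Ω → EuclideanSpace ℝ (Fin p) :=
  (grayAux p η δ J v ε α wneg w0 n).1

/-- `grayPhi … k` is the paper's combined update direction
`φ̃_k = α_k (∇J(u_k) - ε_k) + (1 - α_k) (p/δ)(J(u_k) - J(u_{k-1})) v_k`, where
`u_k = w_k + δ v_k` (recall the index shift: the paper's `w_k`, `v_k` are
`grayW … (k+1)`, `v (k+1)`). -/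
noncomputable def grayPhi (p : ℕ) (η δ : ℝ) (J : EuclideanSpace ℝ (Fin p) → ℝ)
    (v : ℕ → Ω → EuclideanSpace ℝ (Fin p)) (ε : ℕ → Ω → EuclideanSpace ℝ (Fin p))
    (α : ℕ → ℝ) (wneg w0 : EuclideanSpace ℝ (Fin p)) (k : ℕ) :
    Ω → EuclideanSpace ℝ (Fin p) := fun ω =>
  α k • (gradient J (grayW p η δ J v ε α wneg w0 (k + 1) ω + δ • v (k + 1) ω) - ε k ω)
    + (1 - α k) • ((((p : ℝ) / δ) *
        (J (grayW p η δ J v ε α wneg w0 (k + 1) ω + δ • v (k + 1) ω)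
          - J (grayW p η δ J v ε α wneg w0 k ω + δ • v k ω))) • v (k + 1) ω)

/-!
The recursion already holds pointwise, before taking expectations. Write `u_k = w_k + δ v_k`.
Lipschitz continuity of `∇J` gives `‖∇J(u_k) - ε_k‖ ≤ Lδ + ‖∇J(w_k)‖ + ‖ε_k‖`. For the
zeroth-order part, pass through `J(w_{k-1} + δ v_k)`: since `w_k = w_{k-1} - η φ̃_{k-1}`, the first
step costs `Mη‖φ̃_{k-1}‖`, and the descent lemma `|J(x + h) - J x - ⟪∇J x, h⟫| ≤ L‖h‖²/2` at
`x = w_{k-1}` bounds the second by `2δ‖∇J(w_{k-1})‖ + Lδ²`. Squaring the convex combination with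
`(x + y)² ≤ 2x² + 2y²`, `(x + y + z)² ≤ 4x² + 4y² + 2z²` and `(x + y + z)² ≤ 2x² + 6y² + 3z²`
produces the constants. Integrating only needs `φ̃_k ∈ L²`, which follows by induction from
`‖φ̃_k‖ ≤ M + ‖ε_k‖ + (pM/δ)(‖w_k - w_{k-1}‖ + 2δ)`.
-/
open InnerProductSpace NNReal

section SmoothFunction

variable {F : Type*} [NormedAddCommGroup F] [InnerProductSpace ℝ F] [CompleteSpace F]
  {J : F → ℝ} {K : ℝ≥0}

theorem norm_gradient_le_of_lipschitzWith (hJ : LipschitzWith K J) (x : F) :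
    ‖gradient J x‖ ≤ K := by
  rw [← (toDual ℝ F).norm_map, toDual_gradient]
  exact norm_fderiv_le_of_lipschitz ℝ hJ

theorem abs_sub_sub_inner_gradient_le (hJ : Differentiable ℝ J)
    (hg : LipschitzWith K (gradient J)) (x h : F) :
    |J (x + h) - J x - ⟪gradient J x, h⟫_ℝ| ≤ K / 2 * ‖h‖ ^ 2 := by
  set f : ℝ → ℝ := fun t => J (x + t • h) - J x - t * ⟪gradient J x, h⟫_ℝ
  have hf : ∀ t, HasDerivAt f ⟪gradient J (x + t • h) - gradient J x, h⟫_ℝ t := by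
    intro t
    have hpath : HasDerivAt (fun t : ℝ => x + t • h) h t := by
      simpa using ((hasDerivAt_id t).smul_const h).const_add x
    have hJt := (hJ (x + t • h)).hasFDerivAt.comp_hasDerivAt t hpath
    rw [← inner_gradient_left] at hJt
    exact ((hJt.sub_const (J x)).sub ((hasDerivAt_id' t).mul_const ⟪gradient J x, h⟫_ℝ)).congr_deriv
      (by rw [inner_sub_left, one_mul])
  have hB : ∀ t, HasDerivAt (fun t : ℝ => K / 2 * t ^ 2 * ‖h‖ ^ 2) (K * t * ‖h‖ ^ 2) t := by
    intro t
    exact (((hasDerivAt_pow 2 t).const_mul (K / 2 : ℝ)).mul_const (‖h‖ ^ 2)).congr_deriv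
      (by push_cast; ring)
  have hfence := image_norm_le_of_norm_deriv_right_le_deriv_boundary (a := 0) (b := 1)
    (fun t _ => (hf t).continuousAt.continuousWithinAt) (fun t _ => (hf t).hasDerivWithinAt)
    (by simp [f]) hB ?_ (Set.right_mem_Icc.2 zero_le_one)
  · simpa [f] using hfence
  intro t ht
  calc ‖⟪gradient J (x + t • h) - gradient J x, h⟫_ℝ‖
      ≤ ‖gradient J (x + t • h) - gradient J x‖ * ‖h‖ := by
        rw [Real.norm_eq_abs]; exact abs_real_inner_le_norm _ _
    _ ≤ K * ‖t • h‖ * ‖h‖ := by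
        gcongr
        simpa using hg.norm_sub_le (x + t • h) x
    _ = K * t * ‖h‖ ^ 2 := by
        rw [norm_smul, Real.norm_of_nonneg ht.1]; ring

theorem abs_sub_le_of_lipschitzWith_gradient (hJ : Differentiable ℝ J)
    (hg : LipschitzWith K (gradient J)) {r : ℝ} (x : F) {h h' : F} (hh : ‖h‖ ≤ r)
    (hh' : ‖h'‖ ≤ r) :
    |J (x + h) - J (x + h')| ≤ 2 * r * ‖gradient J x‖ + K * r ^ 2 := by
  have d := abs_le.1 (abs_sub_sub_inner_gradient_le hJ hg x h)
  have d' := abs_le.1 (abs_sub_sub_inner_gradient_le hJ hg x h')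
  have i := abs_le.1 (abs_real_inner_le_norm (gradient J x) h)
  have i' := abs_le.1 (abs_real_inner_le_norm (gradient J x) h')
  have hsq : ‖h‖ ^ 2 ≤ r ^ 2 := pow_le_pow_left₀ (norm_nonneg _) hh 2
  have hsq' : ‖h'‖ ^ 2 ≤ r ^ 2 := pow_le_pow_left₀ (norm_nonneg _) hh' 2
  have hgr : ‖gradient J x‖ * ‖h‖ ≤ ‖gradient J x‖ * r := by gcongr
  have hgr' : ‖gradient J x‖ * ‖h'‖ ≤ ‖gradient J x‖ * r := by gcongr
  have hK : (K : ℝ) / 2 * ‖h‖ ^ 2 ≤ K / 2 * r ^ 2 := by gcongr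
  have hK' : (K : ℝ) / 2 * ‖h'‖ ^ 2 ≤ K / 2 * r ^ 2 := by gcongr
  rw [abs_le]
  constructor <;> linarith

end SmoothFunction

theorem norm_smul_add_one_sub_smul_smul_le {E : Type*} [SeminormedAddCommGroup E]
    [NormedSpace ℝ E] {a : ℝ} (ha : a ∈ Set.Icc (0 : ℝ) 1) (x : E) (c : ℝ) {u : E}
    (hu : ‖u‖ ≤ 1) :
    ‖a • x + (1 - a) • (c • u)‖ ≤ a * ‖x‖ + (1 - a) * |c| := by
  have hcu : ‖c • u‖ ≤ |c| := by
    rw [norm_smul, Real.norm_eq_abs]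
    exact mul_le_of_le_one_right (abs_nonneg c) hu
  calc ‖a • x + (1 - a) • (c • u)‖ ≤ ‖a • x‖ + ‖(1 - a) • (c • u)‖ := norm_add_le _ _
    _ ≤ a * ‖x‖ + (1 - a) * |c| := by
      rw [norm_smul, norm_smul, Real.norm_of_nonneg ha.1, Real.norm_of_nonneg (sub_nonneg.2 ha.2)]
      gcongr
      linarith [ha.2]

section GrayDirection

variable {F : Type*} [NormedAddCommGroup F] [InnerProductSpace ℝ F] [CompleteSpace F]
  {J : F → ℝ} {K M L : ℝ≥0} {q δ a : ℝ}

/-- The paper's `φ̃_k` with `w = w_k`, `w' = w_{k-1}`, `v = v_k`, `v' = v_{k-1}`, `e = ε_k`,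
`a = α_k` and `q = p / δ`. -/
noncomputable def grayDirection (J : F → ℝ) (q δ a : ℝ) (w w' v v' e : F) : F :=
  a • (gradient J (w + δ • v) - e) + (1 - a) • ((q * (J (w + δ • v) - J (w' + δ • v'))) • v)

theorem norm_grayDirection_le (hJ : LipschitzWith K J) (ha : a ∈ Set.Icc (0 : ℝ) 1)
    (hq : 0 ≤ q) (hδ : 0 ≤ δ) {w w' v v' : F} (e : F) (hv : ‖v‖ ≤ 1) (hv' : ‖v'‖ ≤ 1) :
    ‖grayDirection J q δ a w w' v v' e‖ ≤ K + ‖e‖ + q * K * (‖w - w'‖ + 2 * δ) := by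
  have hgrad : ‖gradient J (w + δ • v) - e‖ ≤ K + ‖e‖ :=
    (norm_sub_le _ _).trans (add_le_add_left (norm_gradient_le_of_lipschitzWith hJ _) _)
  have hshift : ‖(w + δ • v) - (w' + δ • v')‖ ≤ ‖w - w'‖ + 2 * δ := by
    have hδv : ‖δ • v - δ • v'‖ ≤ 2 * δ := by
      rw [← smul_sub, norm_smul, Real.norm_of_nonneg hδ]
      nlinarith [norm_sub_le v v']
    calc ‖(w + δ • v) - (w' + δ • v')‖ = ‖(w - w') + (δ • v - δ • v')‖ := by
          congr 1; abel
      _ ≤ ‖w - w'‖ + 2 * δ := (norm_add_le _ _).trans (add_le_add_right hδv _)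
  have hdiff : |q * (J (w + δ • v) - J (w' + δ • v'))| ≤ q * K * (‖w - w'‖ + 2 * δ) := by
    rw [abs_mul, abs_of_nonneg hq, mul_assoc]
    gcongr
    exact (hJ.dist_le_mul _ _).trans (by rw [dist_eq_norm]; gcongr)
  have hZ := norm_smul_add_one_sub_smul_smul_le ha (gradient J (w + δ • v) - e)
    (q * (J (w + δ • v) - J (w' + δ • v'))) hv
  have h1 : a * ‖gradient J (w + δ • v) - e‖ ≤ K + ‖e‖ :=
    (mul_le_of_le_one_left (norm_nonneg _) ha.2).trans hgrad
  have h2 : (1 - a) * |q * (J (w + δ • v) - J (w' + δ • v'))| ≤ q * K * (‖w - w'‖ + 2 * δ) :=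
    (mul_le_of_le_one_left (abs_nonneg _) (by linarith [ha.1])).trans hdiff
  exact hZ.trans (by linarith)

theorem sq_norm_grayDirection_le (hJ : Differentiable ℝ J) (hJM : LipschitzWith M J)
    (hg : LipschitzWith L (gradient J)) (ha : a ∈ Set.Icc (0 : ℝ) 1) (hq : 0 ≤ q) (hδ : 0 ≤ δ)
    {η : ℝ} (hη : 0 ≤ η) (w φ : F) {v v' : F} (e : F) (hv : ‖v‖ ≤ 1) (hv' : ‖v'‖ ≤ 1) :
    ‖grayDirection J q δ a (w - η • φ) w v v' e‖ ^ 2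
      ≤ 4 * (1 - a) ^ 2 * q ^ 2 * M ^ 2 * η ^ 2 * ‖φ‖ ^ 2
        + 8 * a ^ 2 * ‖gradient J (w - η • φ)‖ ^ 2
        + 48 * (1 - a) ^ 2 * q ^ 2 * δ ^ 2 * ‖gradient J w‖ ^ 2 + 4 * a ^ 2 * ‖e‖ ^ 2
        + 8 * a ^ 2 * L ^ 2 * δ ^ 2 + 6 * (1 - a) ^ 2 * q ^ 2 * L ^ 2 * δ ^ 4 := by
  set w₁ := w - η • φ
  set X := ‖gradient J (w₁ + δ • v) - e‖
  set Y := |J (w₁ + δ • v) - J (w + δ • v')|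
  have hδv : ‖δ • v‖ ≤ δ := by
    rw [norm_smul, Real.norm_of_nonneg hδ]; exact mul_le_of_le_one_right hδ hv
  have hδv' : ‖δ • v'‖ ≤ δ := by
    rw [norm_smul, Real.norm_of_nonneg hδ]; exact mul_le_of_le_one_right hδ hv'
  have hZ : ‖grayDirection J q δ a w₁ w v v' e‖ ≤ a * X + (1 - a) * (q * Y) := by
    have h := norm_smul_add_one_sub_smul_smul_le ha
      (gradient J (w₁ + δ • v) - e) (q * (J (w₁ + δ • v) - J (w + δ • v'))) hv
    rw [abs_mul, abs_of_nonneg hq] at h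
    exact h
  have hX : X ≤ L * δ + ‖gradient J w₁‖ + ‖e‖ := by
    have hgrad : ‖gradient J (w₁ + δ • v) - gradient J w₁‖ ≤ L * δ :=
      (hg.norm_sub_le _ _).trans (by rw [add_sub_cancel_left]; gcongr)
    linarith [norm_sub_le_norm_sub_add_norm_sub (gradient J (w₁ + δ • v)) (gradient J w₁) e,
      norm_sub_le (gradient J w₁) e]
  have hY : Y ≤ M * η * ‖φ‖ + 2 * δ * ‖gradient J w‖ + L * δ ^ 2 := by
    have hstep : |J (w₁ + δ • v) - J (w + δ • v)| ≤ M * η * ‖φ‖ := by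
      have hshift : (w₁ + δ • v) - (w + δ • v) = -(η • φ) := by simp only [w₁]; abel
      calc |J (w₁ + δ • v) - J (w + δ • v)| ≤ M * ‖(w₁ + δ • v) - (w + δ • v)‖ := by
            rw [← Real.dist_eq, ← dist_eq_norm]; exact hJM.dist_le_mul _ _
        _ = M * η * ‖φ‖ := by rw [hshift, norm_neg, norm_smul, Real.norm_of_nonneg hη, mul_assoc]
    linarith [abs_sub_le (J (w₁ + δ • v)) (J (w + δ • v)) (J (w + δ • v')),
      abs_sub_le_of_lipschitzWith_gradient hJ hg w hδv hδv']
  have hZ2 : ‖grayDirection J q δ a w₁ w v v' e‖ ^ 2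
      ≤ 2 * a ^ 2 * X ^ 2 + 2 * (1 - a) ^ 2 * q ^ 2 * Y ^ 2 :=
    (pow_le_pow_left₀ (norm_nonneg _) hZ 2).trans
      (by nlinarith [sq_nonneg (a * X - (1 - a) * (q * Y))])
  have hX2 : X ^ 2 ≤ 4 * (L * δ) ^ 2 + 4 * ‖gradient J w₁‖ ^ 2 + 2 * ‖e‖ ^ 2 :=
    (pow_le_pow_left₀ (norm_nonneg _) hX 2).trans (by
      nlinarith [sq_nonneg (L * δ - ‖gradient J w₁‖), sq_nonneg (L * δ + ‖gradient J w₁‖ - ‖e‖),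
        sq_nonneg (L * δ - ‖e‖), sq_nonneg (‖gradient J w₁‖ - ‖e‖)])
  have hY2 : Y ^ 2 ≤ 2 * (M * η * ‖φ‖) ^ 2 + 6 * (2 * δ * ‖gradient J w‖) ^ 2
      + 3 * (L * δ ^ 2) ^ 2 :=
    (pow_le_pow_left₀ (abs_nonneg _) hY 2).trans (by
      nlinarith [sq_nonneg (M * η * ‖φ‖ - 2 * δ * ‖gradient J w‖ - L * δ ^ 2),
        sq_nonneg (2 * (2 * δ * ‖gradient J w‖) - L * δ ^ 2)])
  linarith [mul_le_mul_of_nonneg_left hX2 (by positivity : (0 : ℝ) ≤ 2 * a ^ 2),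
    mul_le_mul_of_nonneg_left hY2 (by positivity : (0 : ℝ) ≤ 2 * (1 - a) ^ 2 * q ^ 2)]

end GrayDirection

theorem ae_norm_eq_one_sphereUniform (p : ℕ) : ∀ᵐ x ∂sphereUniform p, ‖x‖ = 1 := by
  refine Measure.ae_smul_measure ?_ _
  rw [ae_map_iff measurable_subtype_coe.aemeasurable
    (measurableSet_eq_fun measurable_norm measurable_const)]
  exact Filter.Eventually.of_forall fun x => mem_sphere_zero_iff_norm.1 x.2

section GrayBox

variable {p : ℕ} {η δ : ℝ} {J : EuclideanSpace ℝ (Fin p) → ℝ}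
  {v ε : ℕ → Ω → EuclideanSpace ℝ (Fin p)} {α : ℕ → ℝ} {wneg w0 : EuclideanSpace ℝ (Fin p)}

theorem grayW_add_two (k : ℕ) :
    grayW p η δ J v ε α wneg w0 (k + 2)
      = grayW p η δ J v ε α wneg w0 (k + 1) - η • grayPhi p η δ J v ε α wneg w0 k :=
  rfl

theorem sq_norm_grayPhi_succ_le {M L : ℝ≥0} (hJ : Differentiable ℝ J) (hJM : LipschitzWith M J)
    (hg : LipschitzWith L (gradient J)) (hδ : 0 < δ) (hη : 0 ≤ η) {k : ℕ}
    (hα : α (k + 1) ∈ Set.Icc (0 : ℝ) 1) {ω : Ω} (hv : ‖v (k + 1) ω‖ ≤ 1)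
    (hv' : ‖v (k + 2) ω‖ ≤ 1) :
    ‖grayPhi p η δ J v ε α wneg w0 (k + 1) ω‖ ^ 2
      ≤ (4 * (1 - α (k + 1)) ^ 2 / δ ^ 2) * (p : ℝ) ^ 2 * M ^ 2 * η ^ 2
          * ‖grayPhi p η δ J v ε α wneg w0 k ω‖ ^ 2
        + 8 * α (k + 1) ^ 2 * ‖gradient J (grayW p η δ J v ε α wneg w0 (k + 2) ω)‖ ^ 2
        + 48 * (1 - α (k + 1)) ^ 2 * (p : ℝ) ^ 2
          * ‖gradient J (grayW p η δ J v ε α wneg w0 (k + 1) ω)‖ ^ 2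
        + 4 * α (k + 1) ^ 2 * ‖ε (k + 1) ω‖ ^ 2
        + (8 * α (k + 1) ^ 2 * L ^ 2 * δ ^ 2
          + 6 * (1 - α (k + 1)) ^ 2 * L ^ 2 * (p : ℝ) ^ 2 * δ ^ 2) := by
  refine (sq_norm_grayDirection_le (q := p / δ) hJ hJM hg hα (by positivity) hδ.le hη
    (grayW p η δ J v ε α wneg w0 (k + 1) ω) (grayPhi p η δ J v ε α wneg w0 k ω) (ε (k + 1) ω)
    hv' hv).trans_eq ?_
  simp only [grayW_add_two, Pi.sub_apply, Pi.smul_apply]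
  field_simp
  ring

variable [MeasurableSpace Ω] {P : Measure Ω}

theorem aestronglyMeasurable_grayPhi (hJ : Continuous J) (hg : Continuous (gradient J))
    (hv : ∀ n, AEStronglyMeasurable (v n) P) (hε : ∀ k, AEStronglyMeasurable (ε k) P) {k : ℕ}
    (hw : AEStronglyMeasurable (grayW p η δ J v ε α wneg w0 k) P)
    (hw' : AEStronglyMeasurable (grayW p η δ J v ε α wneg w0 (k + 1)) P) :
    AEStronglyMeasurable (grayPhi p η δ J v ε α wneg w0 k) P := by
  unfold grayPhi
  fun_prop

theorem aestronglyMeasurable_grayW (hJ : Continuous J) (hg : Continuous (gradient J))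
    (hv : ∀ n, AEStronglyMeasurable (v n) P) (hε : ∀ k, AEStronglyMeasurable (ε k) P)
    (n : ℕ) : AEStronglyMeasurable (grayW p η δ J v ε α wneg w0 n) P := by
  suffices ∀ n, AEStronglyMeasurable (grayW p η δ J v ε α wneg w0 n) P ∧
      AEStronglyMeasurable (grayW p η δ J v ε α wneg w0 (n + 1)) P from (this n).1
  intro n
  induction n with
  | zero => exact ⟨aestronglyMeasurable_const, aestronglyMeasurable_const⟩
  | succ n ih =>
    refine ⟨ih.2, ?_⟩
    rw [grayW_add_two]
    exact ih.2.sub ((aestronglyMeasurable_grayPhi hJ hg hv hε ih.1 ih.2).const_smul η)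

theorem memLp_grayPhi_of_memLp_sub [IsFiniteMeasure P] {K : ℝ≥0} (hJ : LipschitzWith K J)
    (hg : Continuous (gradient J)) (hδ : 0 < δ) (hα : ∀ k, α k ∈ Set.Icc (0 : ℝ) 1)
    (hv : ∀ n, AEStronglyMeasurable (v n) P) (hv1 : ∀ n, ∀ᵐ ω ∂P, ‖v n ω‖ ≤ 1)
    (hε : ∀ k, MemLp (ε k) 2 P) {k : ℕ}
    (hincr : MemLp (fun ω => grayW p η δ J v ε α wneg w0 (k + 1) ω
      - grayW p η δ J v ε α wneg w0 k ω) 2 P) :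
    MemLp (grayPhi p η δ J v ε α wneg w0 k) 2 P := by
  have hmeas : ∀ n, AEStronglyMeasurable (grayW p η δ J v ε α wneg w0 n) P :=
    aestronglyMeasurable_grayW hJ.continuous hg hv fun k => (hε k).1
  have hbound : MemLp (fun ω => K + ‖ε k ω‖ + p / δ * K
      * (‖grayW p η δ J v ε α wneg w0 (k + 1) ω - grayW p η δ J v ε α wneg w0 k ω‖ + 2 * δ)) 2 P :=
    ((memLp_const (K : ℝ)).add (hε k).norm).add
      ((hincr.norm.add (memLp_const (2 * δ))).const_mul (p / δ * K))
  refine hbound.of_le (aestronglyMeasurable_grayPhi hJ.continuous hg hv (fun k => (hε k).1)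
    (hmeas k) (hmeas (k + 1))) ?_
  filter_upwards [hv1 k, hv1 (k + 1)] with ω hvk hvk'
  rw [Real.norm_of_nonneg (by positivity)]
  exact norm_grayDirection_le hJ (hα k) (by positivity) hδ.le _ hvk' hvk

theorem memLp_grayPhi [IsFiniteMeasure P] {K : ℝ≥0} (hJ : LipschitzWith K J)
    (hg : Continuous (gradient J)) (hδ : 0 < δ) (hα : ∀ k, α k ∈ Set.Icc (0 : ℝ) 1)
    (hv : ∀ n, AEStronglyMeasurable (v n) P) (hv1 : ∀ n, ∀ᵐ ω ∂P, ‖v n ω‖ ≤ 1)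
    (hε : ∀ k, MemLp (ε k) 2 P) (k : ℕ) :
    MemLp (grayPhi p η δ J v ε α wneg w0 k) 2 P := by
  refine memLp_grayPhi_of_memLp_sub hJ hg hδ hα hv hv1 hε ?_
  induction k with
  | zero => exact memLp_const (w0 - wneg)
  | succ k ih =>
    simp only [grayW_add_two, Pi.sub_apply, Pi.smul_apply, sub_sub_cancel_left]
    exact ((memLp_grayPhi_of_memLp_sub hJ hg hδ hα hv hv1 hε ih).const_smul η).neg

theorem integrable_sq_norm_gradient_grayW [IsFiniteMeasure P] {K : ℝ≥0}
    (hJ : LipschitzWith K J) (hg : Continuous (gradient J))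
    (hv : ∀ n, AEStronglyMeasurable (v n) P) (hε : ∀ k, AEStronglyMeasurable (ε k) P) (n : ℕ) :
    Integrable (fun ω => ‖gradient J (grayW p η δ J v ε α wneg w0 n ω)‖ ^ 2) P := by
  have hmeas : AEStronglyMeasurable (fun ω => gradient J (grayW p η δ J v ε α wneg w0 n ω)) P :=
    hg.comp_aestronglyMeasurable (aestronglyMeasurable_grayW hJ.continuous hg hv hε n)
  exact (memLp_two_iff_integrable_sq_norm hmeas).1 <| MemLp.of_bound hmeas _ <|
    ae_of_all _ fun _ => norm_gradient_le_of_lipschitzWith hJ _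

end GrayBox

theorem integral_le_of_ae_le_linear_bound [MeasurableSpace Ω] {P : Measure Ω}
    [IsProbabilityMeasure P] {f g₁ g₂ g₃ g₄ : Ω → ℝ} {c₁ c₂ c₃ c₄ c : ℝ}
    (hf : 0 ≤ᵐ[P] f) (hg₁ : Integrable g₁ P) (hg₂ : Integrable g₂ P) (hg₃ : Integrable g₃ P)
    (hg₄ : Integrable g₄ P)
    (h : ∀ᵐ ω ∂P, f ω ≤ c₁ * g₁ ω + c₂ * g₂ ω + c₃ * g₃ ω + c₄ * g₄ ω + c) :
    ∫ ω, f ω ∂P ≤ c₁ * ∫ ω, g₁ ω ∂P + c₂ * ∫ ω, g₂ ω ∂P + c₃ * ∫ ω, g₃ ω ∂P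
      + c₄ * ∫ ω, g₄ ω ∂P + c := by
  refine (integral_mono_of_nonneg hf (by fun_prop) h).trans_eq ?_
  rw [integral_add (by fun_prop) (by fun_prop), integral_add (by fun_prop) (by fun_prop),
    integral_add (by fun_prop) (by fun_prop), integral_add (by fun_prop) (by fun_prop)]
  simp [integral_const_mul]

theorem grayBox_second_moment_recursion_general
    (p : ℕ) (η δ : ℝ) (hη : 0 < η) (hδ : 0 < δ)
    (J : EuclideanSpace ℝ (Fin p) → ℝ) (M L : ℝ) (hM : 0 ≤ M) (hL : 0 ≤ L)
    (hJlip : LipschitzWith M.toNNReal J) (hdiff : Differentiable ℝ J)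
    (hglip : LipschitzWith L.toNNReal (fun x => gradient J x))
    [MeasurableSpace Ω] (P : Measure Ω) [IsProbabilityMeasure P]
    (v : ℕ → Ω → EuclideanSpace ℝ (Fin p)) (hvmeas : ∀ n, Measurable (v n))
    (hdist : ∀ n, Measure.map (v n) P = sphereUniform p)
    (wneg w0 : EuclideanSpace ℝ (Fin p))
    (α : ℕ → ℝ) (hα : ∀ k, α k ∈ Set.Icc (0 : ℝ) 1)
    (ε : ℕ → Ω → EuclideanSpace ℝ (Fin p))
    (hεL2 : ∀ k, MemLp (ε k) 2 P) :
    ∀ k : ℕ, 1 ≤ k →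
      ∫ ω, ‖grayPhi p η δ J v ε α wneg w0 k ω‖ ^ 2 ∂P
        ≤ (4 * (1 - α k) ^ 2 / δ ^ 2) * (p : ℝ) ^ 2 * M ^ 2 * η ^ 2
              * ∫ ω, ‖grayPhi p η δ J v ε α wneg w0 (k - 1) ω‖ ^ 2 ∂P
          + 8 * α k ^ 2 * ∫ ω, ‖gradient J (grayW p η δ J v ε α wneg w0 (k + 1) ω)‖ ^ 2 ∂P
          + 48 * (1 - α k) ^ 2 * (p : ℝ) ^ 2
              * ∫ ω, ‖gradient J (grayW p η δ J v ε α wneg w0 k ω)‖ ^ 2 ∂P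
          + 4 * α k ^ 2 * ∫ ω, ‖ε k ω‖ ^ 2 ∂P
          + 8 * α k ^ 2 * L ^ 2 * δ ^ 2
          + 6 * (1 - α k) ^ 2 * L ^ 2 * (p : ℝ) ^ 2 * δ ^ 2 := by
  intro k hk
  obtain ⟨j, rfl⟩ := Nat.exists_eq_add_of_le' hk
  rw [Nat.add_sub_cancel]
  lift M to ℝ≥0 using hM
  lift L to ℝ≥0 using hL
  rw [Real.toNNReal_coe] at hJlip hglip
  have hv1 : ∀ n, ∀ᵐ ω ∂P, ‖v n ω‖ ≤ 1 := fun n =>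
    (ae_of_ae_map (hvmeas n).aemeasurable ((hdist n) ▸ ae_norm_eq_one_sphereUniform p)).mono
      fun _ h => h.le
  have hv : ∀ n, AEStronglyMeasurable (v n) P := fun n => (hvmeas n).aestronglyMeasurable
  have hφ := memLp_grayPhi (η := η) (wneg := wneg) (w0 := w0) hJlip hglip.continuous hδ hα hv
    hv1 hεL2 j
  have hgrad := integrable_sq_norm_gradient_grayW (η := η) (δ := δ) (α := α) (wneg := wneg)
    (w0 := w0) hJlip hglip.continuous hv fun k => (hεL2 k).1
  have hpt := ((hv1 (j + 1)).and (hv1 (j + 2))).mono fun _ hvω =>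
    sq_norm_grayPhi_succ_le (wneg := wneg) (w0 := w0) (ε := ε) hdiff hJlip hglip hδ hη.le
      (hα (j + 1)) hvω.1 hvω.2
  exact (integral_le_of_ae_le_linear_bound (ae_of_all _ fun _ => by positivity)
    ((memLp_two_iff_integrable_sq_norm hφ.1).1 hφ) (hgrad (j + 2)) (hgrad (j + 1))
    ((memLp_two_iff_integrable_sq_norm (hεL2 (j + 1)).1).1 (hεL2 (j + 1))) hpt).trans_eq
    (add_assoc _ _ _).symm

/-- Second-moment recursion for the gray-box update direction (the paper's Lemma 3):
for every `k ≥ 1`,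
`E‖φ̃_k‖² ≤ (4(1-α_k)² p² M² η²/δ²) E‖φ̃_{k-1}‖² + 8 α_k² E‖∇J(w_k)‖²
  + 48 (1-α_k)² p² E‖∇J(w_{k-1})‖² + 4 α_k² E‖ε_k‖² + 8 α_k² L² δ²
  + 6 (1-α_k)² L² p² δ²`. -/
theorem grayBox_second_moment_recursion
    (p : ℕ) (hp : 0 < p) (η δ : ℝ) (hη : 0 < η) (hδ : 0 < δ)
    (J : EuclideanSpace ℝ (Fin p) → ℝ) (M L : ℝ) (hM : 0 ≤ M) (hL : 0 ≤ L)
    (hJlip : LipschitzWith M.toNNReal J) (hdiff : Differentiable ℝ J)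
    (hglip : LipschitzWith L.toNNReal (fun x => gradient J x))
    [MeasurableSpace Ω] (P : Measure Ω) [IsProbabilityMeasure P]
    (v : ℕ → Ω → EuclideanSpace ℝ (Fin p)) (hvmeas : ∀ n, Measurable (v n))
    (hiid : iIndepFun v P)
    (hdist : ∀ n, Measure.map (v n) P = sphereUniform p)
    (wneg w0 : EuclideanSpace ℝ (Fin p))
    (α : ℕ → ℝ) (hα : ∀ k, α k ∈ Set.Icc (0 : ℝ) 1)
    (ε : ℕ → Ω → EuclideanSpace ℝ (Fin p))
    (hεmeas : ∀ k : ℕ,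
      Measurable[MeasurableSpace.comap (fun ω => (fun i : Fin (k + 2) => v i ω))
        inferInstance] (ε k))
    (hεL2 : ∀ k, MemLp (ε k) 2 P) :
    ∀ k : ℕ, 1 ≤ k →
      ∫ ω, ‖grayPhi p η δ J v ε α wneg w0 k ω‖ ^ 2 ∂P
        ≤ (4 * (1 - α k) ^ 2 / δ ^ 2) * (p : ℝ) ^ 2 * M ^ 2 * η ^ 2
              * ∫ ω, ‖grayPhi p η δ J v ε α wneg w0 (k - 1) ω‖ ^ 2 ∂P
          + 8 * α k ^ 2 * ∫ ω, ‖gradient J (grayW p η δ J v ε α wneg w0 (k + 1) ω)‖ ^ 2 ∂P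
          + 48 * (1 - α k) ^ 2 * (p : ℝ) ^ 2
              * ∫ ω, ‖gradient J (grayW p η δ J v ε α wneg w0 k ω)‖ ^ 2 ∂P
          + 4 * α k ^ 2 * ∫ ω, ‖ε k ω‖ ^ 2 ∂P
          + 8 * α k ^ 2 * L ^ 2 * δ ^ 2
          + 6 * (1 - α k) ^ 2 * L ^ 2 * (p : ℝ) ^ 2 * δ ^ 2 :=
  grayBox_second_moment_recursion_general p η δ hη hδ J M L hM hL hJlip hdiff hglip P v hvmeas hdist
    wneg w0 α hα ε hεL2
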